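/- Let N ≥ 3 be odd, (S,E) the cycle of length N, Vbar = V/(F·e_S), and fix an edge ee in E. Let B in omega(Vbar). Then z_ee('eps(B)) = 0 (i.e. 'eps(B) lies in Vbar^+) if and only if |I ∩ ee| is 0 or 2 for every I in B. -/

import Mathlib

/-- The induced subgraph of `adj` on `I` is a path (type `A_m`, `m ≥ 1`):
there is an injective enumeration `f : Fin (m+1) → S` of `I` such that two
elements of `I` are adjacent iff they are consecutive in the enumeration. -/
def IsPathOn {S : Type} [DecidableEq S] (adj : S → S → Prop) (I : Finset S) : Prop :=
  ∃ (m : ℕ) (f : Fin (m + 1) → S), Function.Injective f ∧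
    I = Finset.image f Finset.univ ∧
    ∀ i j : Fin (m + 1), adj (f i) (f j) ↔ ((i : ℕ) + 1 = (j : ℕ) ∨ (j : ℕ) + 1 = (i : ℕ))

/-- The induced subgraph of `adj` on `I` is connected. -/
def ConnOn {S : Type} (adj : S → S → Prop) (I : Finset S) : Prop :=
  ∀ s ∈ I, ∀ t ∈ I, Relation.ReflTransGen (fun a b => a ∈ I ∧ b ∈ I ∧ adj a b) s t

/-- `I ∈ Cal_I^1`: the induced subgraph on `I` is a path and `|I|` is odd. -/
def CalI1 {S : Type} [DecidableEq S] (adj : S → S → Prop) (I : Finset S) : Prop :=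
  IsPathOn adj I ∧ Odd I.card

/-- `I ≺ I'`. -/
def Prec {S : Type} [DecidableEq S] (adj : S → S → Prop) (I I' : Finset S) : Prop :=
  I ⊂ I' ∧ ¬ ConnOn adj (I' \ I)

/-- `I ♠ I'`. -/
def Spade {S : Type} [DecidableEq S] (adj : S → S → Prop) (I I' : Finset S) : Prop :=
  I ∩ I' = ∅ ∧ ¬ ConnOn adj (I ∪ I')

/-- `I^{ev}`: the set of `s ∈ I` such that `I ∖ {s}` is the disjoint union of
`I', I'' ∈ Cal_I^1` with `I' ♠ I''`. -/
def Iev {S : Type} [DecidableEq S] (adj : S → S → Prop) (I : Finset S) : Set S :=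
  {s | s ∈ I ∧ ∃ I' I'' : Finset S, CalI1 adj I' ∧ CalI1 adj I'' ∧
    Spade adj I' I'' ∧ I.erase s = I' ∪ I''}

/-- Property (P0). -/
def P0 {S : Type} [DecidableEq S] (adj : S → S → Prop) (B : Finset (Finset S)) : Prop :=
  ∀ I ∈ B, ∀ I' ∈ B, I = I' ∨ Spade adj I I' ∨ Prec adj I I' ∨ Prec adj I' I

/-- Property (P1). -/
def P1 {S : Type} [DecidableEq S] (adj : S → S → Prop) (B : Finset (Finset S)) : Prop :=
  ∀ I ∈ B, ∃ (k : ℕ) (f : Fin k → Finset S),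
    (∀ j, f j ∈ B ∧ Prec adj (f j) I) ∧
    (∀ j j', j ≠ j' → Disjoint (f j) (f j')) ∧
    Iev adj I ⊆ ⋃ j, ((f j : Finset S) : Set S)

/-- `phi`: finite sets `B` of elements of `Cal_I^1` satisfying (P0) and (P1). -/
def phiSet {S : Type} [DecidableEq S] (adj : S → S → Prop) : Set (Finset (Finset S)) :=
  {B | (∀ I ∈ B, CalI1 adj I) ∧ P0 adj B ∧ P1 adj B}

/-- `supp(B)`. -/
def suppB {S : Type} [DecidableEq S] (B : Finset (Finset S)) : Finset S := B.biUnion id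

/-- `g_s(B)`. -/
def gs {S : Type} [DecidableEq S] (B : Finset (Finset S)) (s : S) : ℕ :=
  (B.filter (fun I => s ∈ I)).card

/-- `e_I = ∑_{s ∈ I} e_s`. -/
def eSum {S : Type} {V : Type} [AddCommGroup V] [Module (ZMod 2) V]
    (e : S → V) (I : Finset S) : V := ∑ s ∈ I, e s

/-- `L_B`: the `F`-span of `{e_I : I ∈ B}`. -/
def LB {S : Type} {V : Type} [AddCommGroup V] [Module (ZMod 2) V]
    (e : S → V) (B : Finset (Finset S)) : Submodule (ZMod 2) V :=
  Submodule.span (ZMod 2) ((fun I => eSum e I) '' (B : Set (Finset S)))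

/-- `eps(B) = ∑_{s ∈ S} ((g_s(B)(g_s(B)+1)/2) mod 2) e_s`. -/
def epsB {S : Type} [DecidableEq S] [Fintype S] {V : Type} [AddCommGroup V]
    [Module (ZMod 2) V] (e : S → V) (B : Finset (Finset S)) : V :=
  ∑ s : S, ((gs B s * (gs B s + 1) / 2 : ℕ) : ZMod 2) • e s

/-- The triple `(V, <,>, e)` (with graph `adj`) is perfect. -/
def IsPerfect {S : Type} [DecidableEq S] [Fintype S] {V : Type} [AddCommGroup V]
    [Module (ZMod 2) V] (adj : S → S → Prop) (e : S → V) : Prop :=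
  (∀ B ∈ phiSet adj,
      (LinearIndependent (ZMod 2) (fun I : {I : Finset S // I ∈ B} => eSum e I.1)) ∧
      (∀ I : Finset S, CalI1 adj I → (eSum e I ∈ LB e B ↔ I ∈ B))) ∧
  (∀ B ∈ phiSet adj, epsB e B ∈ LB e B) ∧
  Set.BijOn (epsB e) (phiSet adj) (⋃ B ∈ phiSet adj, ((LB e B : Submodule (ZMod 2) V) : Set V)) ∧
  (∀ B ∈ phiSet adj, ∀ B' ∈ phiSet adj, epsB e B' ∈ LB e B → ∀ s : S, gs B' s ≤ gs B s)
/-- Adjacency of the cycle of length `N` on `S = ZMod N`. -/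
def cadj (N : ℕ) (i j : ZMod N) : Prop := j = i + 1 ∨ i = j + 1

/-- `V = F^S` for `S = ZMod N`. -/
abbrev Vc (N : ℕ) := ZMod N → ZMod 2

/-- The standard basis vector `e_s`. -/
def eVec (N : ℕ) (s : ZMod N) : Vc N := Pi.single s 1

/-- The line `F·e_S`, where `e_S = ∑_{s ∈ S} e_s`. -/
def radN (N : ℕ) [NeZero N] : Submodule (ZMod 2) (Vc N) :=
  Submodule.span (ZMod 2) {eSum (eVec N) Finset.univ}

/-- `Vbar = V / (F·e_S)`. -/
abbrev VbarN (N : ℕ) [NeZero N] := Vc N ⧸ radN N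

/-- The quotient map `pi : V → Vbar`. -/
def piQ (N : ℕ) [NeZero N] : Vc N →ₗ[ZMod 2] VbarN N := (radN N).mkQ

/-- `ebar_s = pi(e_s)`. -/
def ebar (N : ℕ) [NeZero N] (s : ZMod N) : VbarN N := piQ N (eVec N s)
open scoped Classical in
/-- The connected component of `s` in the induced subgraph of `adj` on `I`. -/
noncomputable def compOf {S : Type} [DecidableEq S] (adj : S → S → Prop)
    (I : Finset S) (s : S) : Finset S :=
  I.filter (fun t => Relation.ReflTransGen (fun a b => a ∈ I ∧ b ∈ I ∧ adj a b) s t)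

/-- `c(I)`: the set of vertex sets of connected components of the induced subgraph on `I`. -/
noncomputable def comps {S : Type} [DecidableEq S] (adj : S → S → Prop)
    (I : Finset S) : Finset (Finset S) :=
  I.image (compOf adj I)

/-- `|c^0(I)|`: the number of connected components of even cardinality. -/
noncomputable def c0card {S : Type} [DecidableEq S] (adj : S → S → Prop)
    (I : Finset S) : ℕ :=
  ((comps adj I).filter (fun C => Even C.card)).card

/-- `V_0 = {e_I : I ⊊ S with |c^0(I)| even}`. -/
def V0set (N : ℕ) [NeZero N] : Set (Vc N) :=
  {v | ∃ I : Finset (ZMod N), I ≠ Finset.univ ∧ Even (c0card (cadj N) I) ∧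
    v = eSum (eVec N) I}

/-- `V_1 = {e_S} ∪ {e_I : ∅ ≠ I ⊊ S with |c^0(I)| odd}`. -/
def V1set (N : ℕ) [NeZero N] : Set (Vc N) :=
  {v | v = eSum (eVec N) Finset.univ ∨ ∃ I : Finset (ZMod N), I ≠ ∅ ∧ I ≠ Finset.univ ∧
    Odd (c0card (cadj N) I) ∧ v = eSum (eVec N) I}
open scoped Classical in
/-- `I^{odd} = I ∖ I^{ev}` (as a `Finset`). -/
noncomputable def IoddF {S : Type} [DecidableEq S] (adj : S → S → Prop)
    (I : Finset S) : Finset S :=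
  I.filter (fun s => s ∉ Iev adj I)

/-- `n_B = |{I ∈ B : ee ⊆ I}|`. -/
def nB {S : Type} [DecidableEq S] (ee : Finset S) (B : Finset (Finset S)) : ℕ :=
  (B.filter (fun I => ee ⊆ I)).card

open scoped Classical in
/-- `B ↦ B^!`: remove the unique `I_B ∈ B` with `|I_B ∩ ee| = 1` when `n_B` is odd;
leave `B` unchanged when `n_B` is even. -/
noncomputable def bangF {S : Type} [DecidableEq S] (ee : Finset S)
    (B : Finset (Finset S)) : Finset (Finset S) :=
  if h : Odd (nB ee B) ∧ ∃ I ∈ B, (I ∩ ee).card = 1 then B.erase h.2.choose else B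

/-- `omega = {B^! : B ∈ phi}`. -/
def omegaSet {S : Type} [DecidableEq S] (adj : S → S → Prop) (ee : Finset S) :
    Set (Finset (Finset S)) :=
  (bangF ee) '' (phiSet adj)

open scoped Classical in
/-- `Btilde`: the unique element of `phi` with `Btilde^! = B`. -/
noncomputable def tildeF {S : Type} [DecidableEq S] (adj : S → S → Prop) (ee : Finset S)
    (C : Finset (Finset S)) : Finset (Finset S) :=
  if h : ∃ B ∈ phiSet adj, bangF ee B = C then h.choose else ∅

/-- `'eps(B) = eps(Btilde)`. -/
noncomputable def epsO {S : Type} [DecidableEq S] [Fintype S] {V : Type} [AddCommGroup V]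
    [Module (ZMod 2) V] (adj : S → S → Prop) (ee : Finset S) (e : S → V)
    (C : Finset (Finset S)) : V :=
  epsB e (tildeF adj ee C)

/-- `B' ⪯ B` on `omega`. -/
def preceqO {S : Type} [DecidableEq S] [Fintype S] {V : Type} [AddCommGroup V]
    [Module (ZMod 2) V] (adj : S → S → Prop) (ee : Finset S) (e : S → V)
    (B' B : Finset (Finset S)) : Prop :=
  ∃ (k : ℕ) (c : ℕ → Finset (Finset S)), c 0 = B' ∧ c k = B ∧
    (∀ i ≤ k, c i ∈ omegaSet adj ee) ∧
    (∀ i < k, epsO adj ee e (c i) ∈ LB e (c (i + 1)))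

/-- The linear form `v ↦ v t + v t'` on `V`. -/
def zeeV (N : ℕ) (t t' : ZMod N) : Vc N →ₗ[ZMod 2] ZMod 2 :=
  (LinearMap.proj t : Vc N →ₗ[ZMod 2] ZMod 2) + (LinearMap.proj t' : Vc N →ₗ[ZMod 2] ZMod 2)

/-- `z_ee : Vbar → F`, the linear map with `z_ee(ebar_s) = 1` iff `s ∈ ee = {t,t'}`. -/
noncomputable def zee (N : ℕ) [NeZero N] (t t' : ZMod N) : VbarN N →ₗ[ZMod 2] ZMod 2 :=
  Submodule.liftQ (radN N) (zeeV N t t') (by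
    rw [radN, Submodule.span_le, Set.singleton_subset_iff]
    have h1 : ∀ u : ZMod N, (eSum (eVec N) Finset.univ) u = 1 := by
      intro u
      simp [eSum, eVec, Finset.sum_apply, Finset.sum_pi_single]
    simp only [SetLike.mem_coe, LinearMap.mem_ker, zeeV, LinearMap.add_apply,
      LinearMap.proj_apply, h1]
    decide)
/-- The maximal elements of a finite family of finsets, under inclusion. -/
def maxElts {S : Type} [DecidableEq S] (C : Finset (Finset S)) : Finset (Finset S) :=
  C.filter (fun I => ∀ I' ∈ C, ¬ I ⊂ I')

/-- `restB B k = B ∖ (B_1 ∪ … ∪ B_k)`: what remains of `B` after removing the first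
`k` layers; the `k`-th layer (`k ≥ 1`) is `B_k = maxElts (restB B (k-1))`. -/
def restB {S : Type} [DecidableEq S] (B : Finset (Finset S)) : ℕ → Finset (Finset S)
  | 0 => B
  | k + 1 => restB B k \ maxElts (restB B k)

/-- The relation `B' ≤ B` on `phi(V)`. -/
def lePhi {S : Type} [DecidableEq S] [Fintype S] {V : Type} [AddCommGroup V]
    [Module (ZMod 2) V] (adj : S → S → Prop) (e : S → V)
    (B' B : Finset (Finset S)) : Prop :=
  ∃ (k : ℕ) (c : ℕ → Finset (Finset S)), c 0 = B' ∧ c k = B ∧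
    (∀ i ≤ k, c i ∈ phiSet adj) ∧
    (∀ i < k, epsB e (c i) ∈ LB e (c (i + 1)))

/-! On the cycle at most one member of `Btilde` meets the edge `ee = {t, t'}` in a single vertex:
two such sets can be neither `♠`-related (their union would be connected through `ee`) nor
`≺`-related (if `I ≺ I'`, then `I` lies in the interior of the path `I'`, so `I'` contains both
cycle-neighbours of each vertex of `I`, hence all of `ee`). With `n = n_Btilde` and `d ∈ {0, 1}`
the number of such sets, `{g_t, g_t'} = {n, n + d}`, so `z_ee(eps Btilde) = d (n + 1)`, while
`B = Btilde^!` retains such a set exactly when `d = 1` and `n` is even. -/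

theorem Set.OrdConnected.compl_of_bot_mem_or_top_mem {α : Type*} [LinearOrder α] [BoundedOrder α]
    {s : Set α} (hs : s.OrdConnected) (h : ⊥ ∈ s ∨ ⊤ ∈ s) : sᶜ.OrdConnected := by
  rcases h with h | h
  · exact IsUpperSet.ordConnected (IsLowerSet.compl fun x y hyx hx => hs.out h hx ⟨bot_le, hyx⟩)
  · exact IsLowerSet.ordConnected (IsUpperSet.compl fun x y hxy hx => hs.out hx h ⟨hxy, le_top⟩)

section PathEnumeration

variable {S : Type} {adj : S → S → Prop} {m : ℕ} {f : Fin (m + 1) → S}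

theorem ordConnected_preimage_of_connOn
    (hf : ∀ i j : Fin (m + 1), adj (f i) (f j) ↔ ((i : ℕ) + 1 = (j : ℕ) ∨ (j : ℕ) + 1 = (i : ℕ)))
    (hinj : Function.Injective f) {W : Finset S} (hW : (W : Set S) ⊆ Set.range f)
    (hconn : ConnOn adj W) : (f ⁻¹' W).OrdConnected := by
  refine ⟨fun x hx y hy k ⟨hxk, hky⟩ => ?_⟩
  by_contra hk
  -- a step inside `W` cannot jump over the missing index `k`
  have hbelow : ∀ b, Relation.ReflTransGen (fun a b => a ∈ W ∧ b ∈ W ∧ adj a b) (f x) b →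
      ∃ j < k, f j = b := by
    intro b hb
    induction hb with
    | refl => exact ⟨x, lt_of_le_of_ne hxk (by rintro rfl; exact hk hx), rfl⟩
    | tail _ hbc ih =>
      obtain ⟨j, hjk, rfl⟩ := ih
      obtain ⟨j', rfl⟩ := hW hbc.2.1
      have hjj' := (hf j j').mp hbc.2.2
      refine ⟨j', lt_of_le_of_ne ?_ (by rintro rfl; exact hk hbc.2.1), rfl⟩
      simp only [Fin.le_def, Fin.lt_def] at hjk ⊢
      omega
  obtain ⟨j, hjk, hj⟩ := hbelow _ (hconn _ hx _ hy)
  exact (hjk.trans_le hky).ne (hinj hj)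

theorem connOn_of_ordConnected_preimage
    (hf : ∀ i j : Fin (m + 1), adj (f i) (f j) ↔ ((i : ℕ) + 1 = (j : ℕ) ∨ (j : ℕ) + 1 = (i : ℕ)))
    {W : Finset S} (hW : (W : Set S) ⊆ Set.range f) (hord : (f ⁻¹' W).OrdConnected) :
    ConnOn adj W := by
  have hstep : ∀ i : Fin (m + 1), i ≠ Fin.last m →
      ((Order.succ i : Fin (m + 1)) : ℕ) = i + 1 := by
    intro i hi
    obtain ⟨i, rfl⟩ := Fin.eq_castSucc_of_ne_last hi
    simp
  rintro _ hx _ hy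
  obtain ⟨i, rfl⟩ := hW hx
  obtain ⟨j, rfl⟩ := hW hy
  refine Relation.ReflTransGen.lift f (fun _ _ h => h) _ _
    (reflTransGen_of_succ _ (fun k hk => ?_) (fun k hk => ?_))
  all_goals
    have hsucc := hstep k (Fin.ne_last_of_lt hk.2)
    obtain ⟨hk1, hk2⟩ := hk
    simp only [Fin.le_def, Fin.lt_def] at hk1 hk2
    refine ⟨hord.uIcc_subset hx hy ?_, hord.uIcc_subset hx hy ?_, (hf _ _).mpr (by omega)⟩ <;>
      simp only [Set.mem_uIcc, Fin.le_def] <;> omega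

end PathEnumeration

section InducedSubgraphs

variable {S : Type} [DecidableEq S] {adj : S → S → Prop}

theorem IsPathOn.connOn {I : Finset S} (h : IsPathOn adj I) : ConnOn adj I := by
  obtain ⟨m, f, -, rfl, hf⟩ := h
  exact connOn_of_ordConnected_preimage hf (by simp) (by simpa using Set.ordConnected_univ)

theorem ConnOn.union [Std.Symm adj] {I I' : Finset S} (hI : ConnOn adj I)
    (hI' : ConnOn adj I') {s s' : S} (hs : s ∈ I) (hs' : s' ∈ I') (hss' : adj s s') :
    ConnOn adj (I ∪ I') := by
  set R := fun a b => a ∈ I ∪ I' ∧ b ∈ I ∪ I' ∧ adj a b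
  have hlift : ∀ {J : Finset S}, J ⊆ I ∪ I' → ∀ {x y : S},
      Relation.ReflTransGen (fun a b => a ∈ J ∧ b ∈ J ∧ adj a b) x y →
        Relation.ReflTransGen R x y :=
    fun hJ _ _ h => Relation.ReflTransGen.mono (fun _ _ h => ⟨hJ h.1, hJ h.2.1, h.2.2⟩) _ _ h
  have hto : ∀ x ∈ I ∪ I', Relation.ReflTransGen R x s := by
    intro x hx
    rcases Finset.mem_union.mp hx with hx | hx
    · exact hlift Finset.subset_union_left (hI x hx s hs)
    · exact (hlift Finset.subset_union_right (hI' x hx s' hs')).tail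
        ⟨Finset.mem_union_right _ hs', Finset.mem_union_left _ hs, Std.Symm.symm _ _ hss'⟩
  have : Std.Symm R := ⟨fun _ _ h => ⟨h.2.1, h.1, Std.Symm.symm _ _ h.2.2⟩⟩
  exact fun x hx y hy => (hto x hx).trans (Std.Symm.symm _ _ (hto y hy))

/-- Since `I' ∖ I` is disconnected, `I` avoids both ends of the path `I'`. -/
theorem Prec.exists_two_adj_of_mem {I I' : Finset S} (hI : ConnOn adj I) (hI' : IsPathOn adj I')
    (hprec : Prec adj I I') {s : S} (hs : s ∈ I) :
    ∃ a ∈ I', ∃ b ∈ I', a ≠ b ∧ adj s a ∧ adj s b := by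
  obtain ⟨m, f, hinj, rfl, hf⟩ := hI'
  have hrange : ((Finset.image f Finset.univ : Finset S) : Set S) = Set.range f := by simp
  have hsub : (I : Set S) ⊆ Set.range f := hrange ▸ Finset.coe_subset.mpr hprec.1.subset
  have hJ := ordConnected_preimage_of_connOn hf hinj hsub hI
  obtain ⟨r, rfl⟩ := hsub hs
  have hends : ¬ (r = ⊥ ∨ r = ⊤) := by
    intro hr
    refine hprec.2 (connOn_of_ordConnected_preimage hf (by simp) ?_)
    have hcompl : f ⁻¹' ↑(Finset.image f Finset.univ \ I) = (f ⁻¹' I)ᶜ := by ext; simp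
    rw [hcompl]
    exact hJ.compl_of_bot_mem_or_top_mem (hr.imp (fun h => by rwa [← h]) (fun h => by rwa [← h]))
  rw [bot_eq_zero, Fin.top_eq_last, Fin.ext_iff, Fin.ext_iff] at hends
  simp only [Fin.val_zero, Fin.val_last, not_or] at hends
  have hr := r.isLt
  refine ⟨f ⟨r - 1, by omega⟩, by simp, f ⟨r + 1, by omega⟩, by simp, fun h => ?_,
    (hf _ _).mpr (Or.inr (show (r : ℕ) - 1 + 1 = r by omega)), (hf _ _).mpr (Or.inl rfl)⟩
  have := Fin.ext_iff.mp (hinj h)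
  simp only at this
  omega

end InducedSubgraphs

section CrossingSets

variable {S : Type} [DecidableEq S]

def crossing (ee : Finset S) (B : Finset (Finset S)) : Finset (Finset S) :=
  B.filter fun I => (I ∩ ee).card = 1

theorem card_inter_pair_eq_one_iff {t t' : S} (h : t ≠ t') (I : Finset S) :
    (I ∩ {t, t'}).card = 1 ↔ (t ∈ I ∧ t' ∉ I) ∨ (t' ∈ I ∧ t ∉ I) := by
  by_cases ht : t ∈ I <;> by_cases ht' : t' ∈ I <;>
    simp [Finset.inter_insert_of_mem, Finset.inter_insert_of_notMem, ht, ht', h]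

theorem card_inter_pair_eq_zero_or_two_iff (t t' : S) (I : Finset S) :
    (I ∩ {t, t'}).card = 0 ∨ (I ∩ {t, t'}).card = 2 ↔ (I ∩ {t, t'}).card ≠ 1 := by
  have : (I ∩ {t, t'}).card ≤ 2 :=
    (Finset.card_le_card Finset.inter_subset_right).trans Finset.card_le_two
  omega

theorem card_crossing_pair {t t' : S} (h : t ≠ t') (B : Finset (Finset S)) :
    (crossing {t, t'} B).card =
      (B.filter fun I => t ∈ I ∧ t' ∉ I).card + (B.filter fun I => t' ∈ I ∧ t ∉ I).card := by
  simp_rw [crossing, card_inter_pair_eq_one_iff h, Finset.filter_or]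
  exact Finset.card_union_of_disjoint (Finset.disjoint_filter.mpr fun _ _ h1 h2 => h1.2 h2.1)

theorem gs_eq_nB_add (B : Finset (Finset S)) (t t' : S) :
    gs B t = nB {t, t'} B + (B.filter fun I => t ∈ I ∧ t' ∉ I).card := by
  rw [gs, nB, ← Finset.card_filter_add_card_filter_not (s := B.filter (t ∈ ·)) (p := (t' ∈ ·))]
  simp [Finset.filter_filter, Finset.insert_subset_iff]

theorem forall_mem_bangF_card_ne_one_iff {ee : Finset S} {B : Finset (Finset S)}
    (hB : (crossing ee B).card ≤ 1) :
    (∀ I ∈ bangF ee B, (I ∩ ee).card ≠ 1) ↔ (crossing ee B).card = 0 ∨ Odd (nB ee B) := by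
  unfold bangF
  split_ifs with h
  · refine iff_of_true (fun I hI hI1 => ?_) (Or.inr h.1)
    obtain ⟨hne, hIB⟩ := Finset.mem_erase.mp hI
    exact hne (Finset.card_le_one.mp hB I (Finset.mem_filter.mpr ⟨hIB, hI1⟩) _
      (Finset.mem_filter.mpr h.2.choose_spec))
  · rw [Finset.card_eq_zero, crossing, Finset.filter_eq_empty_iff]
    exact ⟨Or.inl, fun h' => h'.elim id fun hodd I hI hI1 => h ⟨hodd, I, hI, hI1⟩⟩

theorem tildeF_spec {adj : S → S → Prop} {ee : Finset S} {C : Finset (Finset S)}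
    (hC : C ∈ omegaSet adj ee) :
    tildeF adj ee C ∈ phiSet adj ∧ bangF ee (tildeF adj ee C) = C := by
  have h : ∃ B ∈ phiSet adj, bangF ee B = C := hC
  rw [tildeF, dif_pos h]
  exact h.choose_spec

end CrossingSets

section Cycle

variable {N : ℕ}

instance : Std.Symm (cadj N) := ⟨fun _ _ h => h.symm⟩

theorem cadj_iff {a b : ZMod N} : cadj N a b ↔ b = a + 1 ∨ b = a - 1 := by
  rw [cadj, eq_sub_iff_add_eq, eq_comm (a := b + 1)]

theorem ne_of_cadj (hN : 1 < N) {a b : ZMod N} (h : cadj N a b) : a ≠ b := by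
  have : Fact (1 < N) := ⟨hN⟩
  rintro rfl
  rcases h with h | h <;> simp at h

theorem eq_or_eq_of_cadj {s a b c : ZMod N} (ha : cadj N s a) (hb : cadj N s b) (hab : a ≠ b)
    (hc : cadj N s c) : c = a ∨ c = b := by
  rw [cadj_iff] at ha hb hc
  rcases ha with rfl | rfl <;> rcases hb with rfl | rfl <;> rcases hc with rfl | rfl <;> simp_all

theorem mem_of_prec_of_cadj {I I' : Finset (ZMod N)} (hI : IsPathOn (cadj N) I)
    (hI' : IsPathOn (cadj N) I') (hprec : Prec (cadj N) I I') {s c : ZMod N} (hs : s ∈ I)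
    (hc : cadj N s c) : c ∈ I' := by
  obtain ⟨a, ha, b, hb, hab, hsa, hsb⟩ := hprec.exists_two_adj_of_mem hI.connOn hI' hs
  rcases eq_or_eq_of_cadj hsa hsb hab hc with rfl | rfl <;> assumption

theorem pair_mem_of_prec {I I' : Finset (ZMod N)} (hI : IsPathOn (cadj N) I)
    (hI' : IsPathOn (cadj N) I') (hprec : Prec (cadj N) I I') {t t' : ZMod N}
    (hadj : cadj N t t') (h : t ∈ I ∨ t' ∈ I) : t ∈ I' ∧ t' ∈ I' := by
  rcases h with h | h
  · exact ⟨hprec.1.subset h, mem_of_prec_of_cadj hI hI' hprec h hadj⟩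
  · exact ⟨mem_of_prec_of_cadj hI hI' hprec h (Std.Symm.symm _ _ hadj), hprec.1.subset h⟩

theorem card_crossing_le_one {B : Finset (Finset (ZMod N))} (hB : B ∈ phiSet (cadj N))
    {t t' : ZMod N} (hadj : cadj N t t') (htt' : t ≠ t') : (crossing {t, t'} B).card ≤ 1 := by
  obtain ⟨hpath, hP0, -⟩ := hB
  refine Finset.card_le_one.mpr fun I hI I' hI' => ?_
  simp only [crossing, Finset.mem_filter, card_inter_pair_eq_one_iff htt'] at hI hI'
  have hdisj : ∀ {s}, I ∩ I' = ∅ → s ∈ I → s ∉ I' := fun h hs hs' =>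
    Finset.eq_empty_iff_forall_notMem.mp h _ (Finset.mem_inter.mpr ⟨hs, hs'⟩)
  rcases hP0 I hI.1 I' hI'.1 with h | ⟨hempty, hnconn⟩ | h | h
  · exact h
  · refine absurd ?_ hnconn
    have hconn := fun {J} (hJ : J ∈ B) => (hpath J hJ).1.connOn
    rcases hI.2 with ⟨ht, -⟩ | ⟨ht', -⟩ <;> rcases hI'.2 with ⟨hs, -⟩ | ⟨hs', -⟩
    · exact absurd hs (hdisj hempty ht)
    · exact (hconn hI.1).union (hconn hI'.1) ht hs' hadj
    · exact (hconn hI.1).union (hconn hI'.1) ht' hs (Std.Symm.symm _ _ hadj)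
    · exact absurd hs' (hdisj hempty ht')
  · have := pair_mem_of_prec (hpath I hI.1).1 (hpath I' hI'.1).1 h hadj (by tauto)
    tauto
  · have := pair_mem_of_prec (hpath I' hI'.1).1 (hpath I hI.1).1 h hadj (by tauto)
    tauto

end Cycle

theorem cast_triangle_succ (n : ℕ) :
    (((n + 1) * (n + 1 + 1) / 2 : ℕ) : ZMod 2) = ((n * (n + 1) / 2 : ℕ) : ZMod 2) + (n + 1) := by
  rw [show (n + 1) * (n + 1 + 1) = n * (n + 1) + (n + 1) * 2 by ring,
    Nat.add_mul_div_right _ _ two_pos]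
  push_cast
  rfl

theorem cast_triangle_add_cast_triangle_eq_zero_iff (n u v : ℕ) (huv : u + v ≤ 1) :
    (((n + u) * (n + u + 1) / 2 : ℕ) : ZMod 2) + (((n + v) * (n + v + 1) / 2 : ℕ) : ZMod 2) = 0 ↔
      u + v = 0 ∨ Odd n := by
  obtain ⟨rfl, rfl⟩ | ⟨rfl, rfl⟩ | ⟨rfl, rfl⟩ : (u = 0 ∧ v = 0) ∨ (u = 1 ∧ v = 0) ∨
      (u = 0 ∧ v = 1) := by omega
  · simp [CharTwo.add_self_eq_zero]
  all_goals
    have hcancel : ∀ x y : ZMod 2, x + (x + y) = y ∧ x + y + x = y := by decide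
    simp only [add_zero, cast_triangle_succ, hcancel]
    rw [← Nat.cast_succ, ZMod.natCast_eq_zero_iff_even, Nat.even_add_one, Nat.not_even_iff_odd]
    simp

theorem zee_epsB {N : ℕ} [NeZero N] (t t' : ZMod N) (B : Finset (Finset (ZMod N))) :
    zee N t t' (epsB (ebar N) B) =
      ((gs B t * (gs B t + 1) / 2 : ℕ) : ZMod 2) +
        ((gs B t' * (gs B t' + 1) / 2 : ℕ) : ZMod 2) := by
  have hebar : ∀ s, zee N t t' (ebar N s) = eVec N s t + eVec N s t' := fun _ => rfl
  simp [epsB, hebar, eVec, Pi.single_apply, Finset.sum_add_distrib, mul_add]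

theorem statement19_general (N : ℕ) [NeZero N] (hN : 3 ≤ N)
    (t t' : ZMod N) (hadj : cadj N t t')
    (B : Finset (Finset (ZMod N))) (hB : B ∈ omegaSet (cadj N) ({t, t'} : Finset (ZMod N))) :
    (zee N t t' (epsO (cadj N) ({t, t'} : Finset (ZMod N)) (ebar N) B) = 0 ↔
      ∀ I ∈ B, (I ∩ ({t, t'} : Finset (ZMod N))).card = 0 ∨
        (I ∩ ({t, t'} : Finset (ZMod N))).card = 2) := by
  have htt' : t ≠ t' := ne_of_cadj (by omega) hadj
  obtain ⟨hBt, hbang⟩ := tildeF_spec hB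
  rw [epsO]
  generalize tildeF (cadj N) {t, t'} B = Bt at hBt hbang
  subst hbang
  have hcross := card_crossing_le_one hBt hadj htt'
  simp only [card_inter_pair_eq_zero_or_two_iff]
  rw [zee_epsB, forall_mem_bangF_card_ne_one_iff hcross, gs_eq_nB_add Bt t t',
    gs_eq_nB_add Bt t' t, Finset.pair_comm t' t, card_crossing_pair htt']
  rw [card_crossing_pair htt'] at hcross
  exact cast_triangle_add_cast_triangle_eq_zero_iff _ _ _ hcross

/-- for `B ∈ omega(Vbar)`: `z_ee('eps(B)) = 0` iff `|I ∩ ee| ∈ {0,2}`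
for every `I ∈ B`. -/
theorem statement19 (N : ℕ) [NeZero N] (hN : 3 ≤ N) (hodd : Odd N)
    (t t' : ZMod N) (hadj : cadj N t t')
    (B : Finset (Finset (ZMod N))) (hB : B ∈ omegaSet (cadj N) ({t, t'} : Finset (ZMod N))) :
    (zee N t t' (epsO (cadj N) ({t, t'} : Finset (ZMod N)) (ebar N) B) = 0 ↔
      ∀ I ∈ B, (I ∩ ({t, t'} : Finset (ZMod N))).card = 0 ∨
        (I ∩ ({t, t'} : Finset (ZMod N))).card = 2) :=
  statement19_general N hN t t' hadj B hB
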